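/- The Sabidussi product distributes over the Zykov join: for finite simple graphs A, B, C, one has A ⋆ (B + C) ≅ (A ⋆ B) + (A ⋆ C). -/

import Mathlib

open SimpleGraph

/-- The Zykov join of two graphs: disjoint union plus all cross edges. -/
def zykovJoin {α β : Type} (G : SimpleGraph α) (H : SimpleGraph β) :
    SimpleGraph (α ⊕ β) where
  Adj x y := (G.sum H).Adj x y ∨ x.isLeft ≠ y.isLeft
  symm := by
    constructor
    intro x y h
    rcases h with h | h
    · exact Or.inl ((G.sum H).adj_symm h)
    · exact Or.inr (Ne.symm h)
  loopless := by
    constructor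
    intro x h
    rcases h with h | h
    · exact (G.sum H).irrefl h
    · exact h rfl

/-- The Sabidussi product: vertices `(a,b)`, `(c,d)` are adjacent iff
`a ~ c` in `G` or `b ~ d` in `H`. -/
def sabidussi {α β : Type} (G : SimpleGraph α) (H : SimpleGraph β) :
    SimpleGraph (α × β) where
  Adj x y := G.Adj x.1 y.1 ∨ H.Adj x.2 y.2
  symm := ⟨fun _ _ h => h.imp (fun h => G.adj_symm h) (fun h => H.adj_symm h)⟩
  loopless := ⟨fun x h => h.elim (fun h => G.irrefl h) (fun h => H.irrefl h)⟩

section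

variable {α β : Type} (G : SimpleGraph α) (H : SimpleGraph β)

@[simp]
theorem sabidussi_adj {x y : α × β} :
    (sabidussi G H).Adj x y ↔ G.Adj x.1 y.1 ∨ H.Adj x.2 y.2 :=
  Iff.rfl

@[simp]
theorem zykovJoin_adj_inl_inl {a b : α} : (zykovJoin G H).Adj (.inl a) (.inl b) ↔ G.Adj a b := by
  simp [zykovJoin]

@[simp]
theorem zykovJoin_adj_inr_inr {a b : β} : (zykovJoin G H).Adj (.inr a) (.inr b) ↔ H.Adj a b := by
  simp [zykovJoin]

@[simp]
theorem zykovJoin_adj_inl_inr {a : α} {b : β} : (zykovJoin G H).Adj (.inl a) (.inr b) := by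
  simp [zykovJoin]

@[simp]
theorem zykovJoin_adj_inr_inl {a : α} {b : β} : (zykovJoin G H).Adj (.inr b) (.inl a) := by
  simp [zykovJoin]

end

-- Pairs whose second coordinates lie on different sides of the join are adjacent on both sides.
def sabidussiZykovJoinIso {α β γ : Type} (A : SimpleGraph α) (B : SimpleGraph β)
    (C : SimpleGraph γ) :
    sabidussi A (zykovJoin B C) ≃g zykovJoin (sabidussi A B) (sabidussi A C) where
  toEquiv := Equiv.prodSumDistrib α β γ
  map_rel_iff' := by
    rintro ⟨a, b | b⟩ ⟨c, d | d⟩ <;> simp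

theorem sabidussi_zykovJoin_distrib_general {α β γ : Type}
    (A : SimpleGraph α) (B : SimpleGraph β) (C : SimpleGraph γ) :
    Nonempty (sabidussi A (zykovJoin B C) ≃g
      zykovJoin (sabidussi A B) (sabidussi A C)) :=
  ⟨sabidussiZykovJoinIso A B C⟩

/-- The Sabidussi product distributes over the Zykov join. -/
theorem sabidussi_zykovJoin_distrib {α β γ : Type} [Fintype α] [Fintype β] [Fintype γ]
    (A : SimpleGraph α) (B : SimpleGraph β) (C : SimpleGraph γ) :
    Nonempty (sabidussi A (zykovJoin B C) ≃g
      zykovJoin (sabidussi A B) (sabidussi A C)) :=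
  sabidussi_zykovJoin_distrib_general A B C
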